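/- Let G = (V, E) be a finite simple graph and let A, B ⊆ V be global independent offensive alliances such that B is obtained from A by one token jumping step, with v the unique vertex of A ∖ B and u the unique vertex of B ∖ A. Then u and v are adjacent, both u and v have degree one, and hence {u, v} is an isolated edge of G (so this token jumping step is in fact a token sliding step along an isolated edge). -/

import Mathlib

open Finset

variable {V : Type*}

section Defs

variable [Fintype V] [DecidableEq V] (G : SimpleGraph V) [DecidableRel G.Adj]

/-- `NbrsIn G A v` is the number of neighbors of `v` lying in `A` (denoted `d_A(v)`). -/
def NbrsIn (A : Finset V) (v : V) : ℕ := (A.filter (fun u => G.Adj v u)).card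

/-- The boundary `∂A = N(A) ∖ A`: vertices outside `A` with a neighbor in `A`. -/
def Bdry (A : Finset V) : Finset V :=
  Finset.univ.filter (fun v => v ∉ A ∧ ∃ u ∈ A, G.Adj v u)

/-- `A` is a defensive alliance: `d_A(v) + 1 ≥ d_{V∖A}(v)` for every `v ∈ A`. -/
def DefAll (A : Finset V) : Prop := ∀ v ∈ A, NbrsIn G A v + 1 ≥ NbrsIn G Aᶜ v

/-- `A` is an offensive alliance: `d_A(v) ≥ d_{V∖A}(v) + 1` for every `v ∈ ∂A`. -/
def OffAll (A : Finset V) : Prop := ∀ v ∈ Bdry G A, NbrsIn G A v ≥ NbrsIn G Aᶜ v + 1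

/-- `A` is a powerful alliance: both a defensive and an offensive alliance. -/
def PowAll (A : Finset V) : Prop := DefAll G A ∧ OffAll G A

/-- `A` is a dominating set: every vertex is in `A` or has a neighbor in `A`. -/
def DomSet (A : Finset V) : Prop := ∀ v : V, v ∈ A ∨ ∃ u ∈ A, G.Adj v u

/-- `A` is an independent set. -/
def IndSet (A : Finset V) : Prop := ∀ u ∈ A, ∀ w ∈ A, ¬ G.Adj u w

/-- The set of leaves (vertices of degree one) of `G`. -/
def Leaves : Finset V := Finset.univ.filter (fun v => G.degree v = 1)

/-- `Z(X) = {v ∈ V ∖ N[X] : N(v) ⊆ L ∪ ∂X}`. -/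
def ZSet (X : Finset V) : Finset V :=
  Finset.univ.filter (fun v => v ∉ X ∧ (∀ u ∈ X, ¬ G.Adj v u) ∧
    G.neighborFinset v ⊆ Leaves G ∪ Bdry G X)

/-- `Y(X) = N[X] ∪ Z(X) ∪ L`. -/
def YSet (X : Finset V) : Finset V := (X ∪ Bdry G X) ∪ ZSet G X ∪ Leaves G

/-- Global independent offensive alliance: offensive alliance that is dominating and independent. -/
def GIOA (A : Finset V) : Prop := OffAll G A ∧ DomSet G A ∧ IndSet G A

end Defs

/-- The induced subgraph `G^{≤r}` on vertices of degree at most `r` (modelled as a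
graph on all of `V` whose edges are the edges of `G` with both endpoints of degree `≤ r`). -/
def GLE [Fintype V] (G : SimpleGraph V) [DecidableRel G.Adj] (r : ℕ) : SimpleGraph V where
  Adj u w := G.Adj u w ∧ G.degree u ≤ r ∧ G.degree w ≤ r
  symm := ⟨fun u w h => ⟨h.1.symm, h.2.2, h.2.1⟩⟩
  loopless := ⟨fun u h => G.loopless.irrefl u h.1⟩

section Steps

variable [DecidableEq V]

/-- Token jumping step: `|A| = |B|` and `|A ∖ B| = 1`. -/
def TJStep (A B : Finset V) : Prop := A.card = B.card ∧ (A \ B).card = 1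

/-- Token addition step: `A ⊆ B` and `|B ∖ A| = 1`. -/
def TAStep (A B : Finset V) : Prop := A ⊆ B ∧ (B \ A).card = 1

/-- Token removal step: `B ⊆ A` and `|A ∖ B| = 1`. -/
def TRStep (A B : Finset V) : Prop := B ⊆ A ∧ (A \ B).card = 1

/-- Token addition/removal (TAR) step. -/
def TARStep (A B : Finset V) : Prop := TAStep A B ∨ TRStep A B

/-- `f 0, f 1, …, f (n-1)` is a reconfiguration sequence (with `n` members, i.e. of
length `n`) from `A` to `B` for step relation `step`, all of whose members satisfy `X`. -/
def SeqOn (step : Finset V → Finset V → Prop) (X : Finset V → Prop)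
    (f : ℕ → Finset V) (A B : Finset V) (n : ℕ) : Prop :=
  1 ≤ n ∧ f 0 = A ∧ f (n - 1) = B ∧
    (∀ i, i + 1 < n → step (f i) (f (i + 1))) ∧ (∀ i, i < n → X (f i))

/-- There is an `X`-`step` reconfiguration sequence of length `n` from `A` to `B`. -/
def IsSeq (step : Finset V → Finset V → Prop) (X : Finset V → Prop)
    (A B : Finset V) (n : ℕ) : Prop :=
  ∃ f : ℕ → Finset V, SeqOn step X f A B n

/-- `X` is reconfiguration monotone increasing (rmi). -/
def Rmi (X : Finset V → Prop) : Prop :=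
  ∀ A B : Finset V, X A → X B → TJStep A B → ∀ v ∈ B \ A, X (insert v A)

/-- `X` is reconfiguration monotone decreasing (rmd). -/
def Rmd (X : Finset V → Prop) : Prop :=
  ∀ A B : Finset V, X A → X B → TJStep A B → ∀ v ∈ A \ B, X (A.erase v)

end Steps

/-
When a token jumps from `v ∈ A` to `u`, independence of `A` leaves `u` as the only possible
neighbour of `v` in `B`. Since `B` dominates, `v ∈ ∂B`, and the offensive condition
`1 ≥ d_B(v) ≥ d_{V∖B}(v) + 1` forces `d_B(v) = 1` and `d_{V∖B}(v) = 0`: `v` is a leaf attached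
to `u`. Symmetrically, `u` is a leaf attached to `v`.
-/

section Alliance

variable [DecidableEq V] {G : SimpleGraph V} [DecidableRel G.Adj]

theorem IndSet.filter_adj_subset_sdiff {X : Finset V} (hX : IndSet G X) {v : V} (hv : v ∈ X)
    (Y : Finset V) : Y.filter (G.Adj v ·) ⊆ Y \ X := fun w hw => by
  rw [mem_filter] at hw
  exact mem_sdiff.mpr ⟨hw.1, fun hwX => hX v hv w hwX hw.2⟩

variable [Fintype V]

theorem nbrsIn_add_nbrsIn_compl (A : Finset V) (v : V) :
    NbrsIn G A v + NbrsIn G Aᶜ v = G.degree v := by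
  rw [NbrsIn, NbrsIn, ← card_union_of_disjoint (disjoint_filter_filter disjoint_compl_right),
    ← filter_union, union_compl, SimpleGraph.degree, SimpleGraph.neighborFinset_eq_filter]

theorem DomSet.mem_bdry {A : Finset V} (hA : DomSet G A) {v : V} (hv : v ∉ A) :
    v ∈ Bdry G A :=
  mem_filter.mpr ⟨mem_univ v, hv, (hA v).resolve_left hv⟩

theorem OffAll.degree_lt_two_mul_nbrsIn {A : Finset V} (hA : OffAll G A) {v : V}
    (hv : v ∈ Bdry G A) : G.degree v < 2 * NbrsIn G A v := by
  have := hA v hv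
  have := nbrsIn_add_nbrsIn_compl (G := G) A v
  omega

theorem OffAll.adj_and_degree_eq_one_of_sdiff_eq_singleton {X Y : Finset V}
    (hY : OffAll G Y) (hYdom : DomSet G Y) (hX : IndSet G X) {u v : V} (hvX : v ∈ X) (hvY : v ∉ Y)
    (hYX : Y \ X = {u}) :
    G.Adj v u ∧ G.degree v = 1 := by
  have hsub : Y.filter (G.Adj v ·) ⊆ {u} := hYX ▸ hX.filter_adj_subset_sdiff hvX Y
  have hle : NbrsIn G Y v ≤ 1 := (card_le_card hsub).trans (card_singleton u).le
  have hlt := hY.degree_lt_two_mul_nbrsIn (hYdom.mem_bdry hvY)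
  have hsplit := nbrsIn_add_nbrsIn_compl (G := G) Y v
  have hone : NbrsIn G Y v = 1 := by omega
  have hfilter : Y.filter (G.Adj v ·) = {u} :=
    eq_of_subset_of_card_le hsub (by rw [card_singleton]; exact hone.ge)
  exact ⟨(mem_filter.mp (hfilter ▸ mem_singleton_self u)).2, by omega⟩

end Alliance

theorem stmt_19_general {V : Type*} [Fintype V] [DecidableEq V]
    (G : SimpleGraph V) [DecidableRel G.Adj] (A B : Finset V)
    (hA : GIOA G A) (hB : GIOA G B)
    (v u : V) (hv : A \ B = {v}) (hu : B \ A = {u}) :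
    G.Adj u v ∧ G.degree u = 1 ∧ G.degree v = 1 := by
  obtain ⟨hvA, hvB⟩ := mem_sdiff.mp (hv ▸ mem_singleton_self v)
  obtain ⟨huB, huA⟩ := mem_sdiff.mp (hu ▸ mem_singleton_self u)
  obtain ⟨hvu, hv1⟩ := hB.1.adj_and_degree_eq_one_of_sdiff_eq_singleton hB.2.1 hA.2.2 hvA hvB hu
  obtain ⟨-, hu1⟩ := hA.1.adj_and_degree_eq_one_of_sdiff_eq_singleton hA.2.1 hB.2.2 huB huA hv
  exact ⟨hvu.symm, hu1, hv1⟩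

theorem stmt_19 {V : Type*} [Fintype V] [DecidableEq V]
    (G : SimpleGraph V) [DecidableRel G.Adj] (A B : Finset V)
    (hA : GIOA G A) (hB : GIOA G B) (hTJ : TJStep A B)
    (v u : V) (hv : A \ B = {v}) (hu : B \ A = {u}) :
    G.Adj u v ∧ G.degree u = 1 ∧ G.degree v = 1 :=
  stmt_19_general G A B hA hB v u hv hu
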